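/- arXiv:1708.07947 — 3 statements merged into one kernel-verified Lean document; each statement's English description precedes it below -/
import Mathlib

section
/- Let A1, A2 ∈ ℂ^{n×n}, F1, F2 ∈ ℂ^{p×p}, C1, C2 ∈ ℂ^{n×p}, and set 𝒜 := lift(A1,A2), ℱ := lift(F1,F2), 𝒞 := lift(C1,C2). Assume that Re(α) + Re(β) < 0 for every eigenvalue α of 𝒜 and every eigenvalue β of ℱ. Then the improper integral 𝒳 := ∫₀^∞ exp(t𝒜)·𝒞·exp(tℱ) dt converges, 𝒳 is of complex-lifting form (i.e., there exist X1, X2 ∈ ℂ^{n×p} with 𝒳 = lift(X1,X2)), and (X1, X2) is the unique pair of n×p complex matrices satisfying the coupled equations A1X1 + A2^#X2 + X1F1 + X2^#F2 = -C1 and A1^#X2 + A2X1 + X1^#F2 + X2F1 = -C2. -/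
open Matrix MeasureTheory

/-- Entrywise complex conjugate of a complex matrix. -/
noncomputable def mconj {n m : Type*} (M : Matrix n m ℂ) : Matrix n m ℂ :=
  M.map (starRingEnd ℂ)

/-- The complex lifting `lift(M1,M2) = [[M1, M2^#],[M2, M1^#]]`. -/
noncomputable def clift {n m : Type*} (M1 M2 : Matrix n m ℂ) :
    Matrix (n ⊕ n) (m ⊕ m) ℂ :=
  Matrix.fromBlocks M1 (mconj M2) M2 (mconj M1)

section basic
variable {α β γ : Type*}

lemma mconj_mconj (M : Matrix α β ℂ) : mconj (mconj M) = M := by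
  ext i j; simp [mconj]

lemma mconj_mul [Fintype β] (M : Matrix α β ℂ) (N : Matrix β γ ℂ) :
    mconj (M * N) = mconj M * mconj N := Matrix.map_mul

lemma mconj_add (M N : Matrix α β ℂ) : mconj (M + N) = mconj M + mconj N := by
  ext i j; simp [mconj]

lemma mconj_sub (M N : Matrix α β ℂ) : mconj (M - N) = mconj M - mconj N := by
  ext i j; simp [mconj]

lemma mconj_zero : mconj (0 : Matrix α β ℂ) = 0 := by
  ext i j; simp [mconj]

lemma mconj_real_smul (t : ℝ) (M : Matrix α β ℂ) : mconj (t • M) = t • mconj M := by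
  ext i j
  simp [mconj, Complex.real_smul]

lemma mconj_fromBlocks {a b c d : Type*} (A : Matrix a c ℂ) (B : Matrix a d ℂ)
    (C : Matrix b c ℂ) (D : Matrix b d ℂ) :
    mconj (Matrix.fromBlocks A B C D) =
      Matrix.fromBlocks (mconj A) (mconj B) (mconj C) (mconj D) :=
  Matrix.fromBlocks_map A B C D _

/-- The block swap matrix. -/
noncomputable def swapM (α : Type*) [DecidableEq α] [Fintype α] : Matrix (α ⊕ α) (α ⊕ α) ℂ :=
  Matrix.fromBlocks 0 1 1 0

variable [DecidableEq α] [Fintype α] [DecidableEq β] [Fintype β]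

lemma swapM_mul_swapM : swapM α * swapM α = 1 := by
  simp [swapM, Matrix.fromBlocks_multiply, Matrix.fromBlocks_one]

/-- The clift predicate. -/
def IsCl (P : Matrix (α ⊕ α) (β ⊕ β) ℂ) : Prop :=
  swapM α * mconj P * swapM β = P

lemma isCl_mul [Fintype γ] [DecidableEq γ] {P : Matrix (α ⊕ α) (β ⊕ β) ℂ}
    {Q : Matrix (β ⊕ β) (γ ⊕ γ) ℂ} (hP : IsCl P) (hQ : IsCl Q) : IsCl (P * Q) := by
  unfold IsCl at *
  have key : swapM α * mconj P * swapM β * (swapM β * mconj Q * swapM γ)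
      = swapM α * mconj (P * Q) * swapM γ := by
    rw [mconj_mul]
    simp only [Matrix.mul_assoc]
    rw [← Matrix.mul_assoc (swapM β) (swapM β), swapM_mul_swapM, Matrix.one_mul]
  rw [← key, hP, hQ]

lemma isCl_clift (M1 M2 : Matrix α β ℂ) : IsCl (clift M1 M2) := by
  unfold IsCl clift swapM
  rw [mconj_fromBlocks, mconj_mconj, mconj_mconj]
  simp [Matrix.fromBlocks_multiply]

lemma IsCl.eq_clift {P : Matrix (α ⊕ α) (β ⊕ β) ℂ} (h : IsCl P) :
    P = clift P.toBlocks₁₁ P.toBlocks₂₁ := by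
  unfold IsCl at h
  conv_lhs at h => rw [← Matrix.fromBlocks_toBlocks P, mconj_fromBlocks]
  rw [swapM, swapM] at h
  rw [Matrix.fromBlocks_multiply, Matrix.fromBlocks_multiply] at h
  simp only [Matrix.zero_mul, Matrix.one_mul, Matrix.mul_zero, Matrix.mul_one,
    zero_add, add_zero] at h
  have h12 := congrArg Matrix.toBlocks₁₂ h
  have h22 := congrArg Matrix.toBlocks₂₂ h
  simp only [Matrix.toBlocks_fromBlocks₁₂, Matrix.toBlocks_fromBlocks₂₂] at h12 h22
  conv_lhs => rw [← Matrix.fromBlocks_toBlocks P]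
  rw [clift, ← h12, ← h22]

end basic

section expstuff
open NormedSpace
variable {ι : Type*} [Fintype ι] [DecidableEq ι]

lemma mconj_eq_conjTranspose_transpose (M : Matrix ι ι ℂ) : mconj M = Mᴴᵀ := by
  ext i j; simp [mconj]

lemma mconj_exp (M : Matrix ι ι ℂ) : mconj (exp M) = exp (mconj M) := by
  rw [mconj_eq_conjTranspose_transpose, mconj_eq_conjTranspose_transpose,
    Matrix.exp_transpose, Matrix.exp_conjTranspose]

lemma isCl_exp {α : Type*} [Fintype α] [DecidableEq α] {M : Matrix (α ⊕ α) (α ⊕ α) ℂ}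
    (h : IsCl M) : IsCl (exp M) := by
  unfold IsCl at *
  have hS : IsUnit (swapM α) := ⟨⟨swapM α, swapM α, swapM_mul_swapM, swapM_mul_swapM⟩, rfl⟩
  have hSinv : (swapM α)⁻¹ = swapM α := Matrix.inv_eq_right_inv swapM_mul_swapM
  rw [mconj_exp, show swapM α * exp (mconj M) * swapM α
      = swapM α * exp (mconj M) * (swapM α)⁻¹ by rw [hSinv],
    ← Matrix.exp_conj _ _ hS, hSinv, h]

lemma isCl_real_smul {α : Type*} [Fintype α] [DecidableEq α] {M : Matrix (α ⊕ α) (α ⊕ α) ℂ}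
    (h : IsCl M) (t : ℝ) : IsCl (t • M) := by
  unfold IsCl at *
  rw [mconj_real_smul, Matrix.mul_smul, Matrix.smul_mul, h]

lemma exp_comm_self (M : Matrix ι ι ℂ) (t : ℝ) :
    M * exp (t • M) = exp (t • M) * M := by
  letI : SeminormedRing (Matrix ι ι ℂ) := Matrix.linftyOpSemiNormedRing
  letI : NormedRing (Matrix ι ι ℂ) := Matrix.linftyOpNormedRing
  letI : NormedAlgebra ℂ (Matrix ι ι ℂ) := Matrix.linftyOpNormedAlgebra
  exact (((Commute.refl M).smul_right t).exp_right).eq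

lemma exp_entry_hasDerivAt (M : Matrix ι ι ℂ) (i j : ι) (t : ℝ) :
    HasDerivAt (fun s : ℝ => exp (s • M) i j) ((exp (t • M) * M) i j) t := by
  letI : SeminormedRing (Matrix ι ι ℂ) := Matrix.linftyOpSemiNormedRing
  letI : NormedRing (Matrix ι ι ℂ) := Matrix.linftyOpNormedRing
  letI : NormedAlgebra ℝ (Matrix ι ι ℂ) := Matrix.linftyOpNormedAlgebra
  have h := hasDerivAt_exp_smul_const (𝕂 := ℝ) M t
  let el : Matrix ι ι ℂ →ₗ[ℝ] ℂ :=
    { toFun := fun A => A i j, map_add' := fun _ _ => rfl, map_smul' := fun _ _ => rfl }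
  exact (LinearMap.toContinuousLinearMap el).hasFDerivAt.comp_hasDerivAt t h

end expstuff

section spanstuff
open NormedSpace
variable {ι : Type*} [Fintype ι] [DecidableEq ι]

/-- Generator set for exponential-polynomial functions attached to a matrix. -/
def expSet (M : Matrix ι ι ℂ) : Set (ℝ → ℂ) :=
  {f | ∃ μ ∈ spectrum ℂ M, ∃ m : ℕ, f = fun t : ℝ => (t : ℂ) ^ m * Complex.exp (t * μ)}

lemma exp_entry_mem_span (M : Matrix ι ι ℂ) (i j : ι) :
    (fun t : ℝ => exp (t • M) i j) ∈ Submodule.span ℂ (expSet M) := by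
  classical
  letI : SeminormedRing (Matrix ι ι ℂ) := Matrix.linftyOpSemiNormedRing
  letI : NormedRing (Matrix ι ι ℂ) := Matrix.linftyOpNormedRing
  letI : NormedAlgebra ℂ (Matrix ι ι ℂ) := Matrix.linftyOpNormedAlgebra
  set f : Module.End ℂ (ι → ℂ) := Matrix.toLinAlgEquiv' M with hf
  let Φ : (ι → ℂ) →ₗ[ℂ] (ℝ → ℂ) :=
    { toFun := fun v => fun t => (exp (t • M)).mulVec v i
      map_add' := fun u v => by funext t; simp [Matrix.mulVec_add]
      map_smul' := fun c v => by funext t; simp [Matrix.mulVec_smul] }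
  have key : ∀ μ : ℂ, f.maxGenEigenspace μ ≤ (Submodule.span ℂ (expSet M)).comap Φ := by
    intro μ
    by_cases hbot : f.maxGenEigenspace μ = ⊥
    · rw [hbot]; exact bot_le
    have hμspec : μ ∈ spectrum ℂ M := by
      have hev : f.HasEigenvalue μ := by
        rw [Module.End.maxGenEigenspace_eq] at hbot
        exact Module.End.hasEigenvalue_of_hasGenEigenvalue
          (k := Module.End.maxGenEigenspaceIndex f μ) hbot
      have := Module.End.hasEigenvalue_iff_mem_spectrum.mp hev
      rwa [hf, AlgEquiv.spectrum_eq] at this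
    intro v hv
    obtain ⟨K, hK⟩ := (Module.End.mem_maxGenEigenspace f μ v).mp hv
    set N : Matrix ι ι ℂ := M - μ • 1 with hN
    have hNK0 : (N ^ K).mulVec v = 0 := by
      have h0 : f - μ • 1 = Matrix.toLinAlgEquiv' N := by
        rw [hN, map_sub, _root_.map_smul, _root_.map_one]
      have h1 : ((f - μ • 1) ^ K) v = (N ^ K).mulVec v := by
        rw [h0, ← map_pow, Matrix.toLinAlgEquiv'_apply]
      rwa [h1] at hK
    have hNm0 : ∀ m : ℕ, K ≤ m → (N ^ m).mulVec v = 0 := by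
      intro m hm
      have : N ^ m = N ^ (m - K) * N ^ K := by
        rw [← pow_add, Nat.sub_add_cancel hm]
      rw [this, ← Matrix.mulVec_mulVec, hNK0, Matrix.mulVec_zero]
    have hrepr : ∀ t : ℝ, (exp (t • M)).mulVec v i =
        Complex.exp (t * μ) * ∑ m ∈ Finset.range K,
          ((m.factorial : ℂ))⁻¹ * ((t : ℂ) ^ m * ((N ^ m).mulVec v i)) := by
      intro t
      have hconst : (t : ℂ) * μ = t • μ := (Complex.real_smul ..).symm
      have hsplit : t • M = ((t : ℂ) * μ) • (1 : Matrix ι ι ℂ) + t • N := by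
        rw [hN, smul_sub, ← smul_assoc, hconst]
        abel
      have hcomm : Commute (((t : ℂ) * μ) • (1 : Matrix ι ι ℂ)) (t • N) :=
        (Commute.one_left (t • N)).smul_left _
      have hexp1 : exp (((t : ℂ) * μ) • (1 : Matrix ι ι ℂ))
          = Complex.exp (t * μ) • (1 : Matrix ι ι ℂ) := by
        rw [Matrix.smul_one_eq_diagonal, Matrix.exp_diagonal, Pi.exp_def]
        rw [Matrix.smul_one_eq_diagonal]
        congr 1
        funext _
        rw [Complex.exp_eq_exp_ℂ]
      have hstep : exp (t • M)
          = Complex.exp (t * μ) • exp (t • N) := by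
        rw [hsplit, Matrix.exp_add_of_commute _ _ hcomm, hexp1, Matrix.smul_mul,
          Matrix.one_mul]
      rw [hstep]
      rw [Matrix.smul_mulVec]
      simp only [Pi.smul_apply, smul_eq_mul]
      congr 1
      -- now: (exp (t • N)).mulVec v i = ∑ ...
      let L : Matrix ι ι ℂ →ₗ[ℂ] ℂ :=
        { toFun := fun A => A.mulVec v i
          map_add' := fun A B => by simp [Matrix.add_mulVec]
          map_smul' := fun c A => by simp [Matrix.smul_mulVec] }
      have hsummable : Summable fun m : ℕ => ((m.factorial : ℂ))⁻¹ • (t • N) ^ m :=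
        expSeries_summable' (𝕂 := ℂ) (t • N)
      have hLsum : L (exp (t • N)) = ∑' m : ℕ, L (((m.factorial : ℂ))⁻¹ • (t • N) ^ m) := by
        rw [exp_eq_tsum ℂ]
        exact (LinearMap.toContinuousLinearMap L).map_tsum hsummable
      have hterm : ∀ m : ℕ, L (((m.factorial : ℂ))⁻¹ • (t • N) ^ m)
          = ((m.factorial : ℂ))⁻¹ * ((t : ℂ) ^ m * ((N ^ m).mulVec v i)) := by
        intro m
        rw [LinearMap.map_smul, smul_pow]
        have : L ((t ^ m : ℝ) • N ^ m) = (t : ℂ) ^ m * ((N ^ m).mulVec v i) := by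
          show (((t ^ m : ℝ) • N ^ m).mulVec v) i = _
          rw [Matrix.smul_mulVec]
          simp [Complex.real_smul]
        rw [this, smul_eq_mul]
      have hvanish : ∀ m ∉ Finset.range K, L (((m.factorial : ℂ))⁻¹ • (t • N) ^ m) = 0 := by
        intro m hm
        rw [hterm m, hNm0 m (by simpa using hm)]
        simp
      calc (exp (t • N)).mulVec v i = L (exp (t • N)) := rfl
        _ = ∑' m : ℕ, L (((m.factorial : ℂ))⁻¹ • (t • N) ^ m) := hLsum
        _ = ∑ m ∈ Finset.range K, L (((m.factorial : ℂ))⁻¹ • (t • N) ^ m) :=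
          tsum_eq_sum hvanish
        _ = ∑ m ∈ Finset.range K,
            ((m.factorial : ℂ))⁻¹ * ((t : ℂ) ^ m * ((N ^ m).mulVec v i)) := by
          exact Finset.sum_congr rfl fun m _ => hterm m
    -- conclude membership
    have hΦv : Φ v = ∑ m ∈ Finset.range K,
        (((m.factorial : ℂ))⁻¹ * ((N ^ m).mulVec v i)) •
          (fun t : ℝ => (t : ℂ) ^ m * Complex.exp (t * μ)) := by
      funext t
      rw [show Φ v t = (exp (t • M)).mulVec v i from rfl, hrepr t, Finset.mul_sum]
      rw [Finset.sum_apply]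
      refine Finset.sum_congr rfl fun m _ => ?_
      simp only [Pi.smul_apply, smul_eq_mul]
      ring
    rw [Submodule.mem_comap, hΦv]
    exact Submodule.sum_mem _ fun m _ => Submodule.smul_mem _ _
      (Submodule.subset_span ⟨μ, hμspec, m, rfl⟩)
  have htop := Module.End.iSup_maxGenEigenspace_eq_top f
  have hv : Pi.single j (1 : ℂ) ∈ (Submodule.span ℂ (expSet M)).comap Φ := by
    have hmem : Pi.single j (1 : ℂ) ∈ (⊤ : Submodule ℂ (ι → ℂ)) := trivial
    rw [← htop] at hmem
    exact (iSup_le key) hmem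
  rw [Submodule.mem_comap] at hv
  have hΦs : Φ (Pi.single j (1 : ℂ)) = fun t : ℝ => exp (t • M) i j := by
    funext t
    show (exp (t • M)).mulVec (Pi.single j 1) i = _
    rw [Matrix.mulVec_single]
    exact mul_one _
  rwa [hΦs] at hv

end spanstuff

section decay
open Filter

/-- Integrable on `[0,∞)` and decaying at infinity. -/
def Dcay (f : ℝ → ℂ) : Prop :=
  MeasureTheory.IntegrableOn f (Set.Ici 0) ∧ Tendsto f atTop (nhds 0)

lemma dcay_zero : Dcay (fun _ : ℝ => (0 : ℂ)) :=
  ⟨integrable_zero _ _ _, tendsto_const_nhds⟩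

lemma dcay_add {f g : ℝ → ℂ} (hf : Dcay f) (hg : Dcay g) : Dcay (fun t => f t + g t) :=
  ⟨hf.1.add hg.1, by simpa using hf.2.add hg.2⟩

lemma dcay_const_mul (c : ℂ) {f : ℝ → ℂ} (hf : Dcay f) : Dcay (fun t => c * f t) :=
  ⟨hf.1.const_mul c, by simpa using hf.2.const_mul c⟩

lemma norm_gen (m : ℕ) (μ : ℂ) (t : ℝ) (ht : 0 ≤ t) :
    ‖(t : ℂ) ^ m * Complex.exp (t * μ)‖ = t ^ m * Real.exp (t * μ.re) := by
  rw [norm_mul, norm_pow, Complex.norm_real, Complex.norm_exp,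
    Real.norm_eq_abs, abs_of_nonneg ht]
  congr 2
  simp [Complex.mul_re]

lemma dcay_gen {m : ℕ} {μ : ℂ} (hμ : μ.re < 0) :
    Dcay (fun t : ℝ => (t : ℂ) ^ m * Complex.exp (t * μ)) := by
  have hb : (0 : ℝ) < -μ.re := by linarith
  constructor
  · rw [integrableOn_Ici_iff_integrableOn_Ioi]
    have hg : MeasureTheory.IntegrableOn
        (fun x : ℝ => x ^ (m : ℝ) * Real.exp (-(-μ.re) * x)) (Set.Ioi 0) := by
      have := integrableOn_rpow_mul_exp_neg_mul_rpow (p := 1) (s := (m : ℝ)) (b := -μ.re)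
        (lt_of_lt_of_le neg_one_lt_zero (Nat.cast_nonneg m)) one_pos hb
      simpa using this
    refine MeasureTheory.Integrable.mono' hg ?_ ?_
    · exact (Continuous.aestronglyMeasurable (by continuity)).restrict
    · filter_upwards [MeasureTheory.ae_restrict_mem measurableSet_Ioi] with t ht
      rw [norm_gen m μ t (le_of_lt ht)]
      rw [Real.rpow_natCast]
      apply le_of_eq
      ring_nf
  · rw [tendsto_zero_iff_norm_tendsto_zero]
    have h0 := Real.tendsto_pow_mul_exp_neg_atTop_nhds_zero m
    have hlin : Tendsto (fun t : ℝ => -μ.re * t) atTop atTop :=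
      Tendsto.const_mul_atTop hb tendsto_id
    have h1 := (h0.comp hlin).const_mul (((-μ.re)⁻¹) ^ m)
    rw [mul_zero] at h1
    refine Tendsto.congr' ?_ h1
    filter_upwards [eventually_ge_atTop (0 : ℝ)] with t ht
    rw [Function.comp_apply, norm_gen m μ t ht]
    have h2 : Real.exp (-(-μ.re * t)) = Real.exp (t * μ.re) := by
      rw [neg_mul, neg_neg, mul_comm]
    rw [mul_pow, h2, ← mul_assoc, ← mul_assoc, ← mul_pow,
      inv_mul_cancel₀ (ne_of_gt hb), one_pow, one_mul]

lemma dcay_gen_mul_span {ι κ : Type*} [Fintype ι] [DecidableEq ι] [Fintype κ] [DecidableEq κ]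
    {A : Matrix ι ι ℂ} {F : Matrix κ κ ℂ}
    (hspec : ∀ α ∈ spectrum ℂ A, ∀ β ∈ spectrum ℂ F, α.re + β.re < 0)
    {f g : ℝ → ℂ} (hf : f ∈ expSet A) (hg : g ∈ Submodule.span ℂ (expSet F)) :
    Dcay (fun t => f t * g t) := by
  induction hg using Submodule.span_induction with
  | mem g hgmem =>
      obtain ⟨μ, hμ, m, rfl⟩ := hf
      obtain ⟨ν, hν, m', rfl⟩ := hgmem
      have heq : (fun t : ℝ => ((t : ℂ) ^ m * Complex.exp (t * μ))
          * ((t : ℂ) ^ m' * Complex.exp (t * ν)))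
          = fun t : ℝ => (t : ℂ) ^ (m + m') * Complex.exp (t * (μ + ν)) := by
        funext t
        rw [pow_add, mul_add, Complex.exp_add]
        ring
      rw [heq]
      exact dcay_gen (by simpa using hspec μ hμ ν hν)
  | zero => simpa using dcay_zero
  | add g₁ g₂ _ _ h1 h2 =>
      have : (fun t => f t * (g₁ + g₂) t)
          = fun t => f t * g₁ t + f t * g₂ t := by funext t; simp [mul_add]
      rw [this]; exact dcay_add h1 h2
  | smul a g₁ _ h1 =>
      have : (fun t => f t * (a • g₁) t) = fun t => a * (f t * g₁ t) := by
        funext t; simp [smul_eq_mul]; ring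
      rw [this]; exact dcay_const_mul a h1

lemma dcay_span_mul_span {ι κ : Type*} [Fintype ι] [DecidableEq ι] [Fintype κ] [DecidableEq κ]
    {A : Matrix ι ι ℂ} {F : Matrix κ κ ℂ}
    (hspec : ∀ α ∈ spectrum ℂ A, ∀ β ∈ spectrum ℂ F, α.re + β.re < 0)
    {f g : ℝ → ℂ} (hf : f ∈ Submodule.span ℂ (expSet A))
    (hg : g ∈ Submodule.span ℂ (expSet F)) :
    Dcay (fun t => f t * g t) := by
  induction hf using Submodule.span_induction with
  | mem f hfmem => exact dcay_gen_mul_span hspec hfmem hg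
  | zero => simpa using dcay_zero
  | add f₁ f₂ _ _ h1 h2 =>
      have : (fun t => (f₁ + f₂) t * g t)
          = fun t => f₁ t * g t + f₂ t * g t := by funext t; simp [add_mul]
      rw [this]; exact dcay_add h1 h2
  | smul a f₁ _ h1 =>
      have : (fun t => (a • f₁) t * g t) = fun t => a * (f₁ t * g t) := by
        funext t; simp [smul_eq_mul]; ring
      rw [this]; exact dcay_const_mul a h1

end decay

section Gstuff
open NormedSpace Filter
variable {ι κ : Type*} [Fintype ι] [DecidableEq ι] [Fintype κ] [DecidableEq κ]

lemma mul3_apply (P : Matrix ι ι ℂ) (Q : Matrix ι κ ℂ) (R : Matrix κ κ ℂ) (i : ι) (j : κ) :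
    (P * Q * R) i j = ∑ k : ι, ∑ l : κ, P i k * Q k l * R l j := by
  simp only [Matrix.mul_apply, Finset.sum_mul]
  exact Finset.sum_comm

lemma dcay_sum {γ : Type*} (s : Finset γ) (f : γ → ℝ → ℂ) (h : ∀ x ∈ s, Dcay (f x)) :
    Dcay (fun t => ∑ x ∈ s, f x t) :=
  ⟨MeasureTheory.integrable_finset_sum s fun x hx => (h x hx).1,
    by simpa using tendsto_finset_sum s fun x hx => (h x hx).2⟩

lemma G_entry_dcay (A : Matrix ι ι ℂ) (F : Matrix κ κ ℂ)
    (hspec : ∀ α ∈ spectrum ℂ A, ∀ β ∈ spectrum ℂ F, α.re + β.re < 0)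
    (C : Matrix ι κ ℂ) (i : ι) (j : κ) :
    Dcay (fun t : ℝ => (exp (t • A) * C * exp (t • F)) i j) := by
  have hrw : (fun t : ℝ => (exp (t • A) * C * exp (t • F)) i j)
      = fun t => ∑ k : ι, ∑ l : κ, C k l * (exp (t • A) i k * exp (t • F) l j) := by
    funext t
    rw [mul3_apply]
    exact Finset.sum_congr rfl fun k _ => Finset.sum_congr rfl fun l _ => by ring
  rw [hrw]
  refine dcay_sum _ _ fun k _ => dcay_sum _ _ fun l _ => ?_
  exact dcay_const_mul (C k l)
    (dcay_span_mul_span hspec (exp_entry_mem_span A i k) (exp_entry_mem_span F l j))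

lemma G_entry_hasDerivAt (A : Matrix ι ι ℂ) (C : Matrix ι κ ℂ) (F : Matrix κ κ ℂ)
    (i : ι) (j : κ) (t : ℝ) :
    HasDerivAt (fun s : ℝ => (exp (s • A) * C * exp (s • F)) i j)
      ((exp (t • A) * (A * C + C * F) * exp (t • F)) i j) t := by
  have hterm : ∀ (k : ι) (l : κ),
      HasDerivAt (fun s : ℝ => exp (s • A) i k * C k l * exp (s • F) l j)
        ((exp (t • A) * A) i k * C k l * exp (t • F) l j
          + exp (t • A) i k * C k l * (exp (t • F) * F) l j) t := by
    intro k l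
    have h1 := (exp_entry_hasDerivAt A i k t).mul_const (C k l)
    exact h1.mul (exp_entry_hasDerivAt F l j t)
  have hmats : exp (t • A) * (A * C + C * F) * exp (t • F)
      = (exp (t • A) * A) * C * exp (t • F)
        + exp (t • A) * C * (exp (t • F) * F) := by
    rw [Matrix.mul_add, Matrix.add_mul]
    congr 1
    · simp only [Matrix.mul_assoc]
    · simp only [Matrix.mul_assoc]
      rw [exp_comm_self]
  have hfun : (fun s : ℝ => (exp (s • A) * C * exp (s • F)) i j)
      = fun s => ∑ k : ι, ∑ l : κ, exp (s • A) i k * C k l * exp (s • F) l j := by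
    funext s; rw [mul3_apply]
  have hval : (exp (t • A) * (A * C + C * F) * exp (t • F)) i j
      = ∑ k : ι, ∑ l : κ, ((exp (t • A) * A) i k * C k l * exp (t • F) l j
          + exp (t • A) i k * C k l * (exp (t • F) * F) l j) := by
    rw [hmats, Matrix.add_apply, mul3_apply, mul3_apply, ← Finset.sum_add_distrib]
    exact Finset.sum_congr rfl fun k _ => Finset.sum_add_distrib.symm
  rw [hfun, hval]
  exact HasDerivAt.fun_sum fun k _ => HasDerivAt.fun_sum fun l _ => hterm k l

lemma G_integral (A : Matrix ι ι ℂ) (F : Matrix κ κ ℂ)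
    (hspec : ∀ α ∈ spectrum ℂ A, ∀ β ∈ spectrum ℂ F, α.re + β.re < 0)
    (C : Matrix ι κ ℂ) (i : ι) (j : κ) :
    ∫ t in Set.Ioi (0 : ℝ), (exp (t • A) * (A * C + C * F) * exp (t • F)) i j
      = -(C i j) := by
  have hder : ∀ t ∈ Set.Ici (0 : ℝ),
      HasDerivAt (fun s : ℝ => (exp (s • A) * C * exp (s • F)) i j)
        ((fun s : ℝ => (exp (s • A) * (A * C + C * F) * exp (s • F)) i j) t) t :=
    fun t _ => G_entry_hasDerivAt A C F i j t
  have hint : MeasureTheory.IntegrableOn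
      (fun t : ℝ => (exp (t • A) * (A * C + C * F) * exp (t • F)) i j)
      (Set.Ioi 0) :=
    ((G_entry_dcay A F hspec (A * C + C * F) i j).1).mono_set Set.Ioi_subset_Ici_self
  have htend := (G_entry_dcay A F hspec C i j).2
  rw [MeasureTheory.integral_Ioi_of_hasDerivAt_of_tendsto' hder hint htend]
  simp [zero_smul, exp_zero]

end Gstuff

section sylvester
open NormedSpace Filter
variable {ι κ : Type*} [Fintype ι] [DecidableEq ι] [Fintype κ] [DecidableEq κ]

lemma mid_identity (A : Matrix ι ι ℂ) (C : Matrix ι κ ℂ) (F : Matrix κ κ ℂ) (t : ℝ) :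
    A * (exp (t • A) * C * exp (t • F)) + (exp (t • A) * C * exp (t • F)) * F
      = exp (t • A) * (A * C + C * F) * exp (t • F) := by
  rw [Matrix.mul_add, Matrix.add_mul]
  congr 1
  · simp only [← Matrix.mul_assoc]
    rw [exp_comm_self]
  · simp only [Matrix.mul_assoc]
    rw [exp_comm_self]

lemma sylvester_solve (A : Matrix ι ι ℂ) (F : Matrix κ κ ℂ)
    (hspec : ∀ α ∈ spectrum ℂ A, ∀ β ∈ spectrum ℂ F, α.re + β.re < 0)
    (C : Matrix ι κ ℂ) :
    A * (Matrix.of fun i j => ∫ t in Set.Ici (0 : ℝ),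
        (exp (t • A) * C * exp (t • F)) i j)
      + (Matrix.of fun i j => ∫ t in Set.Ici (0 : ℝ),
        (exp (t • A) * C * exp (t • F)) i j) * F = -C := by
  set G : ℝ → Matrix ι κ ℂ := fun t => exp (t • A) * C * exp (t • F) with hGdef
  have hInt : ∀ (k : ι) (l : κ),
      MeasureTheory.IntegrableOn (fun t : ℝ => G t k l) (Set.Ici 0) :=
    fun k l => (G_entry_dcay A F hspec C k l).1
  ext i j
  have h1 : ∑ k : ι, A i k * (∫ t in Set.Ici (0 : ℝ), G t k j)
      = ∫ t in Set.Ici (0 : ℝ), ∑ k : ι, A i k * G t k j := by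
    rw [MeasureTheory.integral_finset_sum _ fun k _ => (hInt k j).const_mul (A i k)]
    exact Finset.sum_congr rfl fun k _ => (MeasureTheory.integral_const_mul _ _).symm
  have h2 : ∑ l : κ, (∫ t in Set.Ici (0 : ℝ), G t i l) * F l j
      = ∫ t in Set.Ici (0 : ℝ), ∑ l : κ, G t i l * F l j := by
    rw [MeasureTheory.integral_finset_sum _ fun l _ => (hInt i l).mul_const (F l j)]
    exact Finset.sum_congr rfl fun l _ => (MeasureTheory.integral_mul_const _ _).symm
  have hintsum1 : MeasureTheory.IntegrableOn
      (fun t : ℝ => ∑ k : ι, A i k * G t k j) (Set.Ici 0) :=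
    MeasureTheory.integrable_finset_sum _ fun k _ => (hInt k j).const_mul (A i k)
  have hintsum2 : MeasureTheory.IntegrableOn
      (fun t : ℝ => ∑ l : κ, G t i l * F l j) (Set.Ici 0) :=
    MeasureTheory.integrable_finset_sum _ fun l _ => (hInt i l).mul_const (F l j)
  calc (A * (Matrix.of fun i j => ∫ t in Set.Ici (0 : ℝ), G t i j)
        + (Matrix.of fun i j => ∫ t in Set.Ici (0 : ℝ), G t i j) * F) i j
      = ∑ k : ι, A i k * (∫ t in Set.Ici (0 : ℝ), G t k j)
        + ∑ l : κ, (∫ t in Set.Ici (0 : ℝ), G t i l) * F l j := by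
        simp [Matrix.add_apply, Matrix.mul_apply]
    _ = ∫ t in Set.Ici (0 : ℝ), (∑ k : ι, A i k * G t k j + ∑ l : κ, G t i l * F l j) := by
        rw [h1, h2, MeasureTheory.integral_add hintsum1 hintsum2]
    _ = ∫ t in Set.Ici (0 : ℝ), (exp (t • A) * (A * C + C * F) * exp (t • F)) i j := by
        refine MeasureTheory.integral_congr_ae (Filter.Eventually.of_forall fun t => ?_)
        show ∑ k : ι, A i k * G t k j + ∑ l : κ, G t i l * F l j
            = (exp (t • A) * (A * C + C * F) * exp (t • F)) i j
        rw [← mid_identity A C F t]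
        simp [hGdef, Matrix.add_apply, Matrix.mul_apply]
    _ = ∫ t in Set.Ioi (0 : ℝ), (exp (t • A) * (A * C + C * F) * exp (t • F)) i j :=
        MeasureTheory.integral_Ici_eq_integral_Ioi
    _ = -(C i j) := G_integral A F hspec C i j
    _ = (-C) i j := by simp

lemma sylvester_unique (A : Matrix ι ι ℂ) (F : Matrix κ κ ℂ)
    (hspec : ∀ α ∈ spectrum ℂ A, ∀ β ∈ spectrum ℂ F, α.re + β.re < 0)
    (D : Matrix ι κ ℂ) (hD : A * D + D * F = 0) : D = 0 := by
  have hder : ∀ (i : ι) (j : κ) (t : ℝ),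
      HasDerivAt (fun s : ℝ => (exp (s • A) * D * exp (s • F)) i j) 0 t := by
    intro i j t
    have h := G_entry_hasDerivAt A D F i j t
    rw [hD, Matrix.mul_zero, Matrix.zero_mul] at h
    simpa using h
  ext i j
  have hconst : ∀ t : ℝ, (exp (t • A) * D * exp (t • F)) i j
      = (exp ((0 : ℝ) • A) * D * exp ((0 : ℝ) • F)) i j := fun t =>
    is_const_of_deriv_eq_zero (fun s => (hder i j s).differentiableAt)
      (fun s => (hder i j s).deriv) t 0
  have htend := (G_entry_dcay A F hspec D i j).2
  rw [show (fun t : ℝ => (exp (t • A) * D * exp (t • F)) i j)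
      = fun _ : ℝ => (exp ((0 : ℝ) • A) * D * exp ((0 : ℝ) • F)) i j from
    funext hconst] at htend
  have h0 := tendsto_nhds_unique htend tendsto_const_nhds
  simp only [zero_smul, exp_zero, Matrix.one_mul, Matrix.mul_one] at h0
  simp [← h0]

end sylvester

/-- under the spectral abscissa condition, the integral
`∫₀^∞ exp(t𝒜) 𝒞 exp(tℱ) dt` converges entrywise, is of complex-lifting form
`lift(X1,X2)`, and `(X1,X2)` is the unique solution of the coupled Lyapunov-type
Sylvester equations. -/
theorem stmt_14 {n p : ℕ}
    (A1 A2 : Matrix (Fin n) (Fin n) ℂ) (F1 F2 : Matrix (Fin p) (Fin p) ℂ)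
    (C1 C2 : Matrix (Fin n) (Fin p) ℂ)
    (hspec : ∀ α ∈ spectrum ℂ (clift A1 A2), ∀ β ∈ spectrum ℂ (clift F1 F2),
      α.re + β.re < 0) :
    (∀ (i : Fin n ⊕ Fin n) (j : Fin p ⊕ Fin p),
      IntegrableOn (fun t : ℝ =>
        (NormedSpace.exp (t • clift A1 A2) * clift C1 C2
          * NormedSpace.exp (t • clift F1 F2)) i j) (Set.Ici 0)) ∧
    ∃ X1 X2 : Matrix (Fin n) (Fin p) ℂ,
      (∀ (i : Fin n ⊕ Fin n) (j : Fin p ⊕ Fin p),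
        clift X1 X2 i j = ∫ t in Set.Ici (0 : ℝ),
          (NormedSpace.exp (t • clift A1 A2) * clift C1 C2
            * NormedSpace.exp (t • clift F1 F2)) i j) ∧
      (A1 * X1 + mconj A2 * X2 + X1 * F1 + mconj X2 * F2 = -C1 ∧
        mconj A1 * X2 + A2 * X1 + mconj X1 * F2 + X2 * F1 = -C2) ∧
      (∀ X1' X2' : Matrix (Fin n) (Fin p) ℂ,
        (A1 * X1' + mconj A2 * X2' + X1' * F1 + mconj X2' * F2 = -C1 ∧
          mconj A1 * X2' + A2 * X1' + mconj X1' * F2 + X2' * F1 = -C2) →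
        X1' = X1 ∧ X2' = X2) := by
  classical
  have hdcay := fun (C' : Matrix (Fin n ⊕ Fin n) (Fin p ⊕ Fin p) ℂ) i j =>
    G_entry_dcay (clift A1 A2) (clift F1 F2) hspec C' i j
  refine ⟨fun i j => (hdcay (clift C1 C2) i j).1, ?_⟩
  set G : ℝ → Matrix (Fin n ⊕ Fin n) (Fin p ⊕ Fin p) ℂ := fun t =>
    NormedSpace.exp (t • clift A1 A2) * clift C1 C2
      * NormedSpace.exp (t • clift F1 F2) with hGdef
  set X : Matrix (Fin n ⊕ Fin n) (Fin p ⊕ Fin p) ℂ :=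
    Matrix.of fun i j => ∫ t in Set.Ici (0 : ℝ), G t i j with hXdef
  have hSyl : clift A1 A2 * X + X * clift F1 F2 = -(clift C1 C2) :=
    sylvester_solve (clift A1 A2) (clift F1 F2) hspec (clift C1 C2)
  have hGcl : ∀ t : ℝ, IsCl (G t) := fun t =>
    isCl_mul (isCl_mul (isCl_exp (isCl_real_smul (isCl_clift A1 A2) t)) (isCl_clift C1 C2))
      (isCl_exp (isCl_real_smul (isCl_clift F1 F2) t))
  have hent1 : ∀ (t : ℝ) (i : Fin n) (j : Fin p),
      G t (Sum.inl i) (Sum.inr j) = (starRingEnd ℂ) (G t (Sum.inr i) (Sum.inl j)) := by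
    intro t i j
    conv_lhs => rw [(hGcl t).eq_clift]
    simp [clift, mconj, Matrix.toBlocks₂₁]
  have hent2 : ∀ (t : ℝ) (i : Fin n) (j : Fin p),
      G t (Sum.inr i) (Sum.inr j) = (starRingEnd ℂ) (G t (Sum.inl i) (Sum.inl j)) := by
    intro t i j
    conv_lhs => rw [(hGcl t).eq_clift]
    simp [clift, mconj, Matrix.toBlocks₁₁]
  set X1 : Matrix (Fin n) (Fin p) ℂ := Matrix.of fun i j => X (Sum.inl i) (Sum.inl j) with hX1
  set X2 : Matrix (Fin n) (Fin p) ℂ := Matrix.of fun i j => X (Sum.inr i) (Sum.inl j) with hX2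
  have hXrel1 : ∀ (i : Fin n) (j : Fin p),
      X (Sum.inl i) (Sum.inr j) = (starRingEnd ℂ) (X (Sum.inr i) (Sum.inl j)) := by
    intro i j
    show (∫ t in Set.Ici (0 : ℝ), G t (Sum.inl i) (Sum.inr j)) = _
    rw [MeasureTheory.integral_congr_ae (Filter.Eventually.of_forall fun t => hent1 t i j),
      integral_conj]
    rfl
  have hXrel2 : ∀ (i : Fin n) (j : Fin p),
      X (Sum.inr i) (Sum.inr j) = (starRingEnd ℂ) (X (Sum.inl i) (Sum.inl j)) := by
    intro i j
    show (∫ t in Set.Ici (0 : ℝ), G t (Sum.inr i) (Sum.inr j)) = _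
    rw [MeasureTheory.integral_congr_ae (Filter.Eventually.of_forall fun t => hent2 t i j),
      integral_conj]
    rfl
  have hXcl : clift X1 X2 = X := by
    ext i j
    obtain i | i := i <;> obtain j | j := j
    · simp [clift, hX1]
    · simp [clift, mconj, hX2, hXrel1 i j]
    · simp [clift, hX2]
    · simp [clift, mconj, hX1, hXrel2 i j]
  rw [← hXcl] at hSyl
  have hneg : -(clift C1 C2)
      = Matrix.fromBlocks (-C1) (-(mconj C2)) (-C2) (-(mconj C1)) := by
    unfold clift; rw [Matrix.fromBlocks_neg]
  have hLHS : ∀ (Y1 Y2 : Matrix (Fin n) (Fin p) ℂ),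
      clift A1 A2 * clift Y1 Y2 + clift Y1 Y2 * clift F1 F2
      = Matrix.fromBlocks
          (A1 * Y1 + mconj A2 * Y2 + (Y1 * F1 + mconj Y2 * F2))
          (A1 * mconj Y2 + mconj A2 * mconj Y1 + (Y1 * mconj F2 + mconj Y2 * mconj F1))
          (A2 * Y1 + mconj A1 * Y2 + (Y2 * F1 + mconj Y1 * F2))
          (A2 * mconj Y2 + mconj A1 * mconj Y1 + (Y2 * mconj F2 + mconj Y1 * mconj F1)) := by
    intro Y1 Y2
    unfold clift
    rw [Matrix.fromBlocks_multiply, Matrix.fromBlocks_multiply, Matrix.fromBlocks_add]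
  rw [hLHS, hneg, Matrix.fromBlocks_inj] at hSyl
  obtain ⟨h11, h12, h21, h22⟩ := hSyl
  have heq1 : A1 * X1 + mconj A2 * X2 + X1 * F1 + mconj X2 * F2 = -C1 := by
    rw [← h11]; abel
  have heq2 : mconj A1 * X2 + A2 * X1 + mconj X1 * F2 + X2 * F1 = -C2 := by
    rw [← h21]; abel
  refine ⟨X1, X2, ?_, ⟨heq1, heq2⟩, ?_⟩
  · intro i j
    rw [hXcl]
    rfl
  · intro X1' X2' hE'
    obtain ⟨hE'1, hE'2⟩ := hE'
    have he1 : A1 * (X1' - X1) + mconj A2 * (X2' - X2)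
        + ((X1' - X1) * F1 + mconj (X2' - X2) * F2) = 0 := by
      calc A1 * (X1' - X1) + mconj A2 * (X2' - X2)
            + ((X1' - X1) * F1 + mconj (X2' - X2) * F2)
          = (A1 * X1' + mconj A2 * X2' + X1' * F1 + mconj X2' * F2)
            - (A1 * X1 + mconj A2 * X2 + X1 * F1 + mconj X2 * F2) := by
            rw [mconj_sub, Matrix.mul_sub, Matrix.mul_sub, Matrix.sub_mul, Matrix.sub_mul]; abel
        _ = 0 := by rw [hE'1, heq1, sub_self]
    have he2 : A2 * (X1' - X1) + mconj A1 * (X2' - X2)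
        + ((X2' - X2) * F1 + mconj (X1' - X1) * F2) = 0 := by
      calc A2 * (X1' - X1) + mconj A1 * (X2' - X2)
            + ((X2' - X2) * F1 + mconj (X1' - X1) * F2)
          = (mconj A1 * X2' + A2 * X1' + mconj X1' * F2 + X2' * F1)
            - (mconj A1 * X2 + A2 * X1 + mconj X1 * F2 + X2 * F1) := by
            rw [mconj_sub, Matrix.mul_sub, Matrix.mul_sub, Matrix.sub_mul, Matrix.sub_mul]; abel
        _ = 0 := by rw [hE'2, heq2, sub_self]
    have he1' := congrArg mconj he1
    simp only [mconj_add, mconj_mul, mconj_mconj, mconj_zero] at he1'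
    have he2' := congrArg mconj he2
    simp only [mconj_add, mconj_mul, mconj_mconj, mconj_zero] at he2'
    have hD : clift A1 A2 * clift (X1' - X1) (X2' - X2)
        + clift (X1' - X1) (X2' - X2) * clift F1 F2 = 0 := by
      rw [hLHS, ← Matrix.fromBlocks_zero, Matrix.fromBlocks_inj]
      refine ⟨?_, ?_, ?_, ?_⟩
      · rw [← he1]; try abel
      · rw [← he2']; try abel
      · rw [← he2]; try abel
      · rw [← he1']; try abel
    have hD0 := sylvester_unique (clift A1 A2) (clift F1 F2) hspec _ hD
    have hD1 : X1' - X1 = 0 := by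
      ext i j
      have := congrArg (fun M => M (Sum.inl i) (Sum.inl j)) hD0
      simpa [clift] using this
    have hD2 : X2' - X2 = 0 := by
      ext i j
      have := congrArg (fun M => M (Sum.inr i) (Sum.inl j)) hD0
      simpa [clift] using this
    exact ⟨sub_eq_zero.mp hD1, sub_eq_zero.mp hD2⟩
end

section
/- Let A1 ∈ ℂ^{n×n}, F1 ∈ ℂ^{p×p}, C1 ∈ ℂ^{n×p}, and consider the pair of equations (*) A1X1 - X1F1 = C1 and A1^#X2 - X2F1 = 0 in unknowns X1, X2 ∈ ℂ^{n×p}. (a) If (*) has exactly one solution (X1, X2), then X2 = 0 and X1 is the unique solution of the Sylvester equation A1X - XF1 = C1. (b) Conversely, if the Sylvester equation A1X - XF1 = C1 has exactly one solution X, and if the spectrum of A1 is closed under complex conjugation or the spectrum of F1 is closed under complex conjugation, then (*) has exactly one solution, namely (X, 0). -/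
open Matrix

open Polynomial

/-- Membership in the spectrum of a complex matrix is equivalent to being a root of the
characteristic polynomial. -/
lemma mem_spectrum_iff_root {n : ℕ} (M : Matrix (Fin n) (Fin n) ℂ) (μ : ℂ) :
    μ ∈ spectrum ℂ M ↔ M.charpoly.IsRoot μ := by
  rw [spectrum.mem_iff, Matrix.isUnit_iff_isUnit_det, isUnit_iff_ne_zero, not_not,
    Polynomial.IsRoot, Matrix.charpoly, eval_det, matPolyEquiv_charmatrix]
  have h : algebraMap ℂ (Matrix (Fin n) (Fin n) ℂ) μ = Matrix.scalar (Fin n) μ := rfl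
  rw [h]
  simp [eval_sub, eval_X, eval_C]

lemma spectrum_transpose {n : ℕ} (M : Matrix (Fin n) (Fin n) ℂ) :
    spectrum ℂ Mᵀ = spectrum ℂ M := by
  have h : Mᵀ.charpoly = M.charpoly := by
    rw [Matrix.charpoly, Matrix.charpoly, ← Matrix.det_transpose (charmatrix M)]
    congr 1
    ext i j
    simp [charmatrix_apply, Matrix.diagonal_apply, Matrix.transpose_apply, eq_comm]
  ext μ
  rw [mem_spectrum_iff_root, mem_spectrum_iff_root, h]

lemma mem_spectrum_mconj {n : ℕ} (M : Matrix (Fin n) (Fin n) ℂ) (μ : ℂ) :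
    μ ∈ spectrum ℂ (mconj M) ↔ (starRingEnd ℂ) μ ∈ spectrum ℂ M := by
  rw [mem_spectrum_iff_root, mem_spectrum_iff_root, mconj,
    Matrix.charpoly_map M (starRingEnd ℂ)]
  unfold Polynomial.IsRoot
  rw [Polynomial.eval_map]
  have : μ = (starRingEnd ℂ) ((starRingEnd ℂ) μ) := by simp
  rw [this, Polynomial.eval₂_at_apply]
  simp

lemma exists_eigvec {n : ℕ} (M : Matrix (Fin n) (Fin n) ℂ) {μ : ℂ} (h : μ ∈ spectrum ℂ M) :
    ∃ v : Fin n → ℂ, v ≠ 0 ∧ M *ᵥ v = μ • v := by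
  have h' : μ ∈ spectrum ℂ ((Matrix.toLinAlgEquiv' (R := ℂ) (n := Fin n)) M) := by
    rwa [AlgEquiv.spectrum_eq]
  have he : Module.End.HasEigenvalue
      ((Matrix.toLinAlgEquiv' M : Module.End ℂ (Fin n → ℂ))) μ :=
    Module.End.HasEigenvalue.of_mem_spectrum h'
  obtain ⟨v, hv⟩ := he.exists_hasEigenvector
  refine ⟨v, hv.right, ?_⟩
  have := hv.apply_eq_smul
  rwa [Matrix.toLinAlgEquiv'_apply] at this

lemma pow_comm_of_comm {n p : ℕ} (A : Matrix (Fin n) (Fin n) ℂ) (F : Matrix (Fin p) (Fin p) ℂ)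
    (Y : Matrix (Fin n) (Fin p) ℂ) (h : A * Y = Y * F) (k : ℕ) : A ^ k * Y = Y * F ^ k := by
  induction k with
  | zero => simp
  | succ k ih => rw [pow_succ, pow_succ, Matrix.mul_assoc, h, ← Matrix.mul_assoc, ih, Matrix.mul_assoc]

lemma aeval_comm_of_comm {n p : ℕ} (A : Matrix (Fin n) (Fin n) ℂ) (F : Matrix (Fin p) (Fin p) ℂ)
    (Y : Matrix (Fin n) (Fin p) ℂ) (h : A * Y = Y * F) (q : Polynomial ℂ) :
    Polynomial.aeval A q * Y = Y * Polynomial.aeval F q := by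
  induction q using Polynomial.induction_on' with
  | add r s hr hs => rw [map_add, map_add, Matrix.add_mul, Matrix.mul_add, hr, hs]
  | monomial k a =>
      rw [Polynomial.aeval_monomial, Polynomial.aeval_monomial]
      rw [← Algebra.smul_def, ← Algebra.smul_def, Matrix.smul_mul, Matrix.mul_smul,
        pow_comm_of_comm A F Y h k]

lemma inj_of_disjoint {n p : ℕ} (A : Matrix (Fin n) (Fin n) ℂ) (F : Matrix (Fin p) (Fin p) ℂ)
    (hd : ∀ μ ∈ spectrum ℂ A, μ ∉ spectrum ℂ F) :
    ∀ Y : Matrix (Fin n) (Fin p) ℂ, A * Y - Y * F = 0 → Y = 0 := by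
  intro Y hY
  rcases Nat.eq_zero_or_pos n with hn | hn
  · subst hn; ext i j; exact i.elim0
  have hcomm : A * Y = Y * F := sub_eq_zero.mp hY
  set q := F.charpoly with hq
  have hch : Polynomial.aeval F q = 0 := Matrix.aeval_self_charpoly F
  have key : Polynomial.aeval A q * Y = 0 := by
    rw [aeval_comm_of_comm A F Y hcomm q, hch, Matrix.mul_zero]
  haveI : Nonempty (Fin n) := ⟨⟨0, hn⟩⟩
  have hunit : IsUnit (Polynomial.aeval A q) := by
    by_contra hnu
    have h0 : (0 : ℂ) ∈ spectrum ℂ (Polynomial.aeval A q) := (spectrum.zero_mem_iff ℂ).mpr hnu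
    have hne : (spectrum ℂ A).Nonempty :=
      spectrum.nonempty_of_isAlgClosed_of_finiteDimensional ℂ A
    rw [spectrum.map_polynomial_aeval_of_nonempty A q hne] at h0
    obtain ⟨μ, hμ, hμ0⟩ := h0
    have : μ ∈ spectrum ℂ F := (mem_spectrum_iff_root F μ).mpr hμ0
    exact hd μ hμ this
  obtain ⟨u, hu⟩ := hunit
  calc Y = (↑u⁻¹ * ↑u : Matrix (Fin n) (Fin n) ℂ) * Y := by
        rw [u.inv_mul, Matrix.one_mul]
  _ = (↑u⁻¹ : Matrix (Fin n) (Fin n) ℂ) * (Polynomial.aeval A q * Y) := by rw [hu, Matrix.mul_assoc]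
  _ = 0 := by rw [key, Matrix.mul_zero]

lemma spec_disjoint_of_inj {n p : ℕ} (A : Matrix (Fin n) (Fin n) ℂ)
    (F : Matrix (Fin p) (Fin p) ℂ)
    (hinj : ∀ Z : Matrix (Fin n) (Fin p) ℂ, A * Z - Z * F = 0 → Z = 0) :
    ∀ μ ∈ spectrum ℂ A, μ ∉ spectrum ℂ F := by
  intro μ hA hF
  obtain ⟨v, hv0, hv⟩ := exists_eigvec A hA
  rw [← spectrum_transpose] at hF
  obtain ⟨w, hw0, hw⟩ := exists_eigvec Fᵀ hF
  set Z : Matrix (Fin n) (Fin p) ℂ := Matrix.of (fun i j => v i * w j) with hZdef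
  have hZ : A * Z - Z * F = 0 := by
    ext i j
    have h1 : ∑ k, A i k * v k = μ * v i := congrFun hv i
    have h2 : ∑ k, F k j * w k = μ * w j := by
      have := congrFun hw j
      simpa [Matrix.mulVec, dotProduct, Matrix.transpose_apply] using this
    simp only [Matrix.sub_apply, Matrix.mul_apply, Matrix.zero_apply, hZdef, Matrix.of_apply]
    calc (∑ k, A i k * (v k * w j)) - ∑ k, v i * w k * F k j
        = (∑ k, A i k * v k) * w j - v i * ∑ k, F k j * w k := by
          rw [Finset.sum_mul, Finset.mul_sum]; congr 1 <;> (apply Finset.sum_congr rfl; intros; ring)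
    _ = 0 := by rw [h1, h2]; ring
  have := hinj Z hZ
  obtain ⟨i, hi⟩ := Function.ne_iff.mp hv0
  obtain ⟨j, hj⟩ := Function.ne_iff.mp hw0
  have : Z i j = 0 := by rw [this]; rfl
  rw [hZdef] at this
  exact mul_ne_zero hi hj this

/-- relation between the pair of equations
`A1X1 - X1F1 = C1 ∧ A1^#X2 - X2F1 = 0` and the Sylvester equation `A1X - XF1 = C1`. -/
theorem stmt_15 {n p : ℕ}
    (A1 : Matrix (Fin n) (Fin n) ℂ) (F1 : Matrix (Fin p) (Fin p) ℂ)
    (C1 : Matrix (Fin n) (Fin p) ℂ) :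
    -- (a)
    ((∀ X1 X2 : Matrix (Fin n) (Fin p) ℂ,
      (A1 * X1 - X1 * F1 = C1 ∧ mconj A1 * X2 - X2 * F1 = 0) →
      (∀ X1' X2' : Matrix (Fin n) (Fin p) ℂ,
        (A1 * X1' - X1' * F1 = C1 ∧ mconj A1 * X2' - X2' * F1 = 0) →
        X1' = X1 ∧ X2' = X2) →
      X2 = 0 ∧ A1 * X1 - X1 * F1 = C1 ∧
        ∀ X : Matrix (Fin n) (Fin p) ℂ, A1 * X - X * F1 = C1 → X = X1)) ∧
    -- (b)
    (∀ X : Matrix (Fin n) (Fin p) ℂ,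
      A1 * X - X * F1 = C1 →
      (∀ X' : Matrix (Fin n) (Fin p) ℂ, A1 * X' - X' * F1 = C1 → X' = X) →
      ((∀ s ∈ spectrum ℂ A1, starRingEnd ℂ s ∈ spectrum ℂ A1) ∨
        (∀ s ∈ spectrum ℂ F1, starRingEnd ℂ s ∈ spectrum ℂ F1)) →
      ((∃! XY : Matrix (Fin n) (Fin p) ℂ × Matrix (Fin n) (Fin p) ℂ,
          A1 * XY.1 - XY.1 * F1 = C1 ∧ mconj A1 * XY.2 - XY.2 * F1 = 0) ∧
        ∀ X1 X2 : Matrix (Fin n) (Fin p) ℂ,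
          (A1 * X1 - X1 * F1 = C1 ∧ mconj A1 * X2 - X2 * F1 = 0) →
          X1 = X ∧ X2 = 0)) := by
  constructor
  · -- (a)
    rintro X1 X2 ⟨h1, h2⟩ huniq
    have hz : mconj A1 * (0 : Matrix (Fin n) (Fin p) ℂ)
        - (0 : Matrix (Fin n) (Fin p) ℂ) * F1 = 0 := by
      rw [Matrix.mul_zero, Matrix.zero_mul, sub_zero]
    have h0 := huniq X1 0 ⟨h1, hz⟩
    refine ⟨h0.2.symm, h1, fun X hX => (huniq X X2 ⟨hX, h2⟩).1⟩
  · -- (b)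
    rintro X h1 h2 h3
    -- homogeneous Sylvester equation has only the zero solution
    have hinj : ∀ Z : Matrix (Fin n) (Fin p) ℂ, A1 * Z - Z * F1 = 0 → Z = 0 := by
      intro Z hZ
      have : A1 * (X + Z) - (X + Z) * F1 = C1 := by
        rw [Matrix.mul_add, Matrix.add_mul]
        have : A1 * X + A1 * Z - (X * F1 + Z * F1)
            = (A1 * X - X * F1) + (A1 * Z - Z * F1) := by abel
        rw [this, h1, hZ, add_zero]
      have := h2 (X + Z) this
      exact by simpa using congrArg (fun W => W - X) this
    have hd : ∀ μ ∈ spectrum ℂ A1, μ ∉ spectrum ℂ F1 := spec_disjoint_of_inj A1 F1 hinj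
    have hd' : ∀ μ ∈ spectrum ℂ (mconj A1), μ ∉ spectrum ℂ F1 := by
      intro μ hμ hμF
      have hμA : (starRingEnd ℂ) μ ∈ spectrum ℂ A1 := (mem_spectrum_mconj A1 μ).mp hμ
      rcases h3 with hA | hF
      · have := hA _ hμA
        simp only [Complex.conj_conj] at this
        exact hd μ this hμF
      · exact hd _ hμA (hF μ hμF)
    have hcinj : ∀ Y : Matrix (Fin n) (Fin p) ℂ, mconj A1 * Y - Y * F1 = 0 → Y = 0 :=
      inj_of_disjoint (mconj A1) F1 hd'
    have hz : mconj A1 * (0 : Matrix (Fin n) (Fin p) ℂ)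
        - (0 : Matrix (Fin n) (Fin p) ℂ) * F1 = 0 := by
      rw [Matrix.mul_zero, Matrix.zero_mul, sub_zero]
    refine ⟨⟨(X, 0), ⟨h1, hz⟩, ?_⟩, ?_⟩
    · rintro ⟨Y1, Y2⟩ ⟨hy1, hy2⟩
      exact Prod.ext (h2 Y1 hy1) (hcinj Y2 hy2)
    · rintro X1 X2 ⟨ha, hb⟩
      exact ⟨h2 X1 ha, hcinj X2 hb⟩
end

section
/- Let A2 ∈ ℂ^{n×n}, F2 ∈ ℂ^{p×p}, C2 ∈ ℂ^{n×p}. (a) If X ∈ ℂ^{n×p} satisfies the conjugate-Stein equation X = A2X^#F2 + C2, then X satisfies the ordinary Stein equation X = A2A2^#·X·F2^#F2 + C2 + A2C2^#F2. (b) Consequently, if |α|·|β| < 1 for every eigenvalue α of A2A2^# and every eigenvalue β of F2^#F2, then the conjugate-Stein equation X = A2X^#F2 + C2 has at most one solution X ∈ ℂ^{n×p}. -/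
open Matrix

lemma mconj_mul_s19 {n m p : Type*} [Fintype m] (A : Matrix n m ℂ) (B : Matrix m p ℂ) :
    mconj (A * B) = mconj A * mconj B := Matrix.map_mul

lemma mconj_add_s19 {n m : Type*} (A B : Matrix n m ℂ) :
    mconj (A + B) = mconj A + mconj B := Matrix.map_add _ (by simp) _ _

lemma mconj_sub_s19 {n m : Type*} (A B : Matrix n m ℂ) :
    mconj (A - B) = mconj A - mconj B := Matrix.map_sub _ (by simp) _ _

lemma mconj_mconj_s19 {n m : Type*} (A : Matrix n m ℂ) : mconj (mconj A) = A := by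
  ext i j; simp [mconj]

lemma stein_a {n p : ℕ} (A2 : Matrix (Fin n) (Fin n) ℂ) (F2 : Matrix (Fin p) (Fin p) ℂ)
    (C2 : Matrix (Fin n) (Fin p) ℂ) (X : Matrix (Fin n) (Fin p) ℂ)
    (h : X = A2 * mconj X * F2 + C2) :
    X = A2 * mconj A2 * X * (mconj F2 * F2) + C2 + A2 * mconj C2 * F2 := by
  have hmc : mconj X = mconj A2 * X * mconj F2 + mconj C2 := by
    conv_lhs => rw [h, mconj_add_s19, mconj_mul_s19, mconj_mul_s19, mconj_mconj_s19]
  conv_lhs => rw [h, hmc]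
  noncomm_ring [Matrix.mul_add, Matrix.add_mul, Matrix.mul_assoc]

open scoped Matrix.Norms.L2Operator in
lemma stein_zero {n p : ℕ} (hn : 0 < n) (hp : 0 < p)
    (M : Matrix (Fin n) (Fin n) ℂ) (N : Matrix (Fin p) (Fin p) ℂ)
    (Z : Matrix (Fin n) (Fin p) ℂ)
    (hZ : Z = M * Z * N)
    (hspec : ∀ α ∈ spectrum ℂ M, ∀ β ∈ spectrum ℂ N, ‖α‖ * ‖β‖ < 1) :
    Z = 0 := by
  haveI : NeZero n := ⟨hn.ne'⟩
  haveI : NeZero p := ⟨hp.ne'⟩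
  -- iterate
  have hiter : ∀ k : ℕ, Z = M ^ k * Z * N ^ k := by
    intro k
    induction k with
    | zero => simp
    | succ k ih =>
      calc Z = M * Z * N := hZ
      _ = M * (M ^ k * Z * N ^ k) * N := by rw [← ih]
      _ = M ^ (k + 1) * Z * N ^ (k + 1) := by
          rw [pow_succ' M, pow_succ N]
          simp only [Matrix.mul_assoc]
  -- spectral radius product < 1
  obtain ⟨α, hα, hα'⟩ := spectrum.exists_nnnorm_eq_spectralRadius (a := M)
  obtain ⟨β, hβ, hβ'⟩ := spectrum.exists_nnnorm_eq_spectralRadius (a := N)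
  have hprod : spectralRadius ℂ M * spectralRadius ℂ N < 1 := by
    rw [← hα', ← hβ', ← ENNReal.coe_mul]
    rw [show (1 : ENNReal) = ((1 : NNReal) : ENNReal) from rfl, ENNReal.coe_lt_coe,
      ← NNReal.coe_lt_coe]
    push_cast
    simpa using hspec α hα β hβ
  -- Gelfand
  have hM := spectrum.pow_nnnorm_pow_one_div_tendsto_nhds_spectralRadius M
  have hN := spectrum.pow_nnnorm_pow_one_div_tendsto_nhds_spectralRadius N
  have hmul : Filter.Tendsto
      (fun k : ℕ => ((‖M ^ k‖₊ * ‖N ^ k‖₊ : NNReal) : ENNReal) ^ (1 / (k : ℝ)))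
      Filter.atTop (nhds (spectralRadius ℂ M * spectralRadius ℂ N)) := by
    have hMtop : spectralRadius ℂ M ≠ ⊤ := by rw [← hα']; exact ENNReal.coe_ne_top
    have hNtop : spectralRadius ℂ N ≠ ⊤ := by rw [← hβ']; exact ENNReal.coe_ne_top
    have := ENNReal.Tendsto.mul hM (Or.inr hNtop) hN (Or.inr hMtop)
    refine this.congr fun k => ?_
    rw [ENNReal.coe_mul, ENNReal.mul_rpow_of_nonneg _ _ (by positivity)]
  have hev := hmul.eventually_lt_const hprod
  obtain ⟨k, hk, hk1⟩ := (hev.and (Filter.eventually_ge_atTop 1)).exists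
  -- deduce ‖M^k‖₊ * ‖N^k‖₊ < 1
  have hc : (‖M ^ k‖₊ * ‖N ^ k‖₊ : NNReal) < 1 := by
    by_contra hle
    push_neg at hle
    have : (1 : ENNReal) ≤ ((‖M ^ k‖₊ * ‖N ^ k‖₊ : NNReal) : ENNReal) ^ (1 / (k : ℝ)) :=
      ENNReal.one_le_rpow (by exact_mod_cast hle) (by positivity)
    exact absurd hk (not_lt.mpr this)
  -- norm bound
  have hb : ‖Z‖₊ ≤ (‖M ^ k‖₊ * ‖N ^ k‖₊) * ‖Z‖₊ := by
    calc ‖Z‖₊ = ‖M ^ k * Z * N ^ k‖₊ := by rw [← hiter k]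
    _ ≤ ‖M ^ k * Z‖₊ * ‖N ^ k‖₊ := Matrix.l2_opNNNorm_mul _ _
    _ ≤ ‖M ^ k‖₊ * ‖Z‖₊ * ‖N ^ k‖₊ := by
        gcongr; exact Matrix.l2_opNNNorm_mul _ _
    _ = (‖M ^ k‖₊ * ‖N ^ k‖₊) * ‖Z‖₊ := by ring
  have hz0 : ‖Z‖₊ = 0 := by
    by_contra h0
    have hlt : (‖M ^ k‖₊ * ‖N ^ k‖₊) * ‖Z‖₊ < 1 * ‖Z‖₊ :=
      mul_lt_mul_of_pos_right hc (pos_iff_ne_zero.mpr h0)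
    rw [one_mul] at hlt
    exact lt_irrefl _ (lt_of_le_of_lt hb hlt)
  simpa using hz0

/-- every solution of the conjugate-Stein equation solves an
ordinary Stein equation, and under the spectral radius condition the
conjugate-Stein equation has at most one solution. -/
theorem stmt_19 {n p : ℕ}
    (A2 : Matrix (Fin n) (Fin n) ℂ) (F2 : Matrix (Fin p) (Fin p) ℂ)
    (C2 : Matrix (Fin n) (Fin p) ℂ) :
    -- (a)
    (∀ X : Matrix (Fin n) (Fin p) ℂ,
      X = A2 * mconj X * F2 + C2 →
      X = A2 * mconj A2 * X * (mconj F2 * F2) + C2 + A2 * mconj C2 * F2) ∧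
    -- (b)
    ((∀ α ∈ spectrum ℂ (A2 * mconj A2), ∀ β ∈ spectrum ℂ (mconj F2 * F2),
        ‖α‖ * ‖β‖ < 1) →
      ∀ X Y : Matrix (Fin n) (Fin p) ℂ,
        X = A2 * mconj X * F2 + C2 → Y = A2 * mconj Y * F2 + C2 → X = Y) := by
  refine ⟨fun X h => stein_a A2 F2 C2 X h, ?_⟩
  intro hspec X Y hX hY
  rcases Nat.eq_zero_or_pos n with hn | hn
  · subst hn; ext i j; exact i.elim0
  rcases Nat.eq_zero_or_pos p with hp | hp
  · subst hp; ext i j; exact j.elim0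
  set Z := X - Y with hZdef
  have h1 : Z = A2 * mconj Z * F2 := by
    rw [hZdef, mconj_sub_s19]
    conv_lhs => rw [hX, hY]
    rw [Matrix.mul_sub, Matrix.sub_mul]
    abel
  have h2 : Z = (A2 * mconj A2) * Z * (mconj F2 * F2) := by
    have hmc : mconj Z = mconj A2 * Z * mconj F2 := by
      conv_lhs => rw [h1, mconj_mul_s19, mconj_mul_s19, mconj_mconj_s19]
    conv_lhs => rw [h1, hmc]
    simp only [Matrix.mul_assoc]
  have := stein_zero hn hp _ _ _ h2 hspec
  have hXY : X - Y = 0 := this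
  exact sub_eq_zero.mp hXY
end
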